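/- arXiv:1805.12317 — 6 statements merged into one kernel-verified Lean document; each statement's English description precedes it below -/
import Mathlib

section
/- Let S ⊆ X be measurable with D(S) ≥ γ for some γ > 0, and define ŷ_S : X → [-1,1] by ŷ_S(x) = (1 - 2·y(x)) for x ∈ S and ŷ_S(x) = 0 otherwise. Suppose the measurable hypothesis f : X → [0,1] is (C,α)-multiaccurate and there exists c ∈ C with E[|c(x) - ŷ_S(x)|] ≤ τ. Then the classification error of f on S satisfies er_S(f;y) ≤ 2·(α + τ)/γ. -/
/-!
On `S` the target `ŷ_S = 1 - 2y` satisfies `ŷ_S (f - y) = |f - y|`, and `|f - y| ≥ 1/2` wherever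
the rounded prediction `f̄` differs from `y`. Testing multiaccuracy against the `c ∈ C` that is
`τ`-close to `ŷ_S` in `L¹` gives `∫_S |f - y| = E[ŷ_S (f - y)] ≤ α + τ`, since `|f - y| ≤ 1`.
Markov's inequality then bounds the mass of misclassified points of `S` by `2 (α + τ)`, and
dividing by `D(S) ≥ γ` gives the conditional error.
-/

open MeasureTheory ProbabilityTheory

lemma sign_mul_sub_eq_abs_sub {y t : ℝ} (hy : y = 0 ∨ y = 1) (ht : t ∈ Set.Icc (0 : ℝ) 1) :
    (1 - 2 * y) * (t - y) = |t - y| := by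
  obtain ⟨ht0, ht1⟩ := ht
  rcases hy with rfl | rfl
  · rw [abs_of_nonneg (by linarith)]; ring
  · rw [abs_of_nonpos (by linarith)]; ring

lemma half_le_abs_sub_of_round_ne {y t : ℝ} (hy : y = 0 ∨ y = 1)
    (h : (if t > 1/2 then (1 : ℝ) else 0) ≠ y) : 1/2 ≤ |t - y| := by
  rcases hy with rfl | rfl <;> split_ifs at h with ht <;> norm_num at h
  · exact le_abs.mpr (Or.inl (by linarith))
  · exact le_abs.mpr (Or.inr (by linarith))

lemma integral_mul_le_integral_mul_add_integral_abs_sub {X : Type*} [MeasurableSpace X]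
    {μ : Measure X} {b c u : X → ℝ} (hb : Integrable b μ) (hc : Integrable c μ)
    (hu : AEStronglyMeasurable u μ) (hu1 : ∀ x, |u x| ≤ 1) :
    ∫ x, b x * u x ∂μ ≤ ∫ x, c x * u x ∂μ + ∫ x, |c x - b x| ∂μ := by
  have hbound : ∀ᵐ x ∂μ, ‖u x‖ ≤ 1 := Filter.Eventually.of_forall hu1
  have hbu := hb.mul_bdd hu hbound
  have hcu := hc.mul_bdd hu hbound
  have hcb : Integrable (fun x => |c x - b x|) μ := (hc.sub hb).abs
  rw [← integral_add hcu hcb]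
  refine integral_mono hbu (hcu.add hcb) fun x => ?_
  have : (b x - c x) * u x ≤ |c x - b x| :=
    calc (b x - c x) * u x ≤ |b x - c x| * |u x| := (le_abs_self _).trans (abs_mul _ _).le
      _ ≤ |c x - b x| := by rw [abs_sub_comm]; exact mul_le_of_le_one_right (abs_nonneg _) (hu1 x)
  show b x * u x ≤ c x * u x + |c x - b x|
  linarith

lemma setIntegral_abs_sub_eq_integral_indicator_mul {X : Type*} [MeasurableSpace X]
    {μ : Measure X} {S : Set X} (hS : MeasurableSet S) {f y : X → ℝ}
    (hy01 : ∀ x, y x = 0 ∨ y x = 1) (hf01 : ∀ x, f x ∈ Set.Icc (0 : ℝ) 1) :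
    ∫ x in S, |f x - y x| ∂μ = ∫ x, S.indicator (fun x => 1 - 2 * y x) x * (f x - y x) ∂μ := by
  rw [← integral_indicator hS]
  congr 1 with x
  by_cases hx : x ∈ S
  · simp only [Set.indicator_of_mem hx, sign_mul_sub_eq_abs_sub (hy01 x) (hf01 x)]
  · simp only [Set.indicator_of_notMem hx, zero_mul]

lemma measureReal_setOf_round_ne_inter_le {X : Type*} [MeasurableSpace X] {μ : Measure X}
    [IsFiniteMeasure μ] {S : Set X} (hS : MeasurableSet S) {f y : X → ℝ}
    (hy01 : ∀ x, y x = 0 ∨ y x = 1) (hfy : IntegrableOn (fun x => |f x - y x|) S μ) :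
    μ.real ({x | (if f x > 1/2 then (1 : ℝ) else 0) ≠ y x} ∩ S)
      ≤ 2 * ∫ x in S, |f x - y x| ∂μ := by
  have hmarkov := mul_meas_ge_le_integral_of_nonneg
    (Filter.Eventually.of_forall fun x => abs_nonneg (f x - y x)) hfy (1/2)
  rw [measureReal_restrict_apply' hS] at hmarkov
  have hsub : {x | (if f x > 1/2 then (1 : ℝ) else 0) ≠ y x} ∩ S
      ⊆ {x | 1/2 ≤ |f x - y x|} ∩ S :=
    Set.inter_subset_inter_left S fun x hx => half_le_abs_sub_of_round_ne (hy01 x) hx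
  linarith [measureReal_mono (μ := μ) hsub]

lemma toReal_cond_le_div {Ω : Type*} [MeasurableSpace Ω] {μ : Measure Ω} [IsFiniteMeasure μ]
    {S E : Set Ω} (hS : MeasurableSet S) {a γ : ℝ} (hγ : 0 < γ) (hSγ : γ ≤ μ.real S)
    (hE : μ.real (E ∩ S) ≤ a) : (μ[|S] E).toReal ≤ a / γ := by
  rw [cond_apply hS, ENNReal.toReal_mul, ENNReal.toReal_inv, Set.inter_comm, inv_mul_eq_div]
  calc μ.real (E ∩ S) / μ.real S ≤ μ.real (E ∩ S) / γ :=
        div_le_div_of_nonneg_left measureReal_nonneg hγ hSγ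
    _ ≤ a / γ := div_le_div_of_nonneg_right hE hγ.le

theorem multiaccuracy_classification_error_general
    {X : Type*} [MeasurableSpace X] (D : Measure X) [IsProbabilityMeasure D]
    (y f : X → ℝ) (hy : Measurable y) (hy01 : ∀ x, y x = 0 ∨ y x = 1)
    (hf : Measurable f) (hf01 : ∀ x, f x ∈ Set.Icc (0 : ℝ) 1)
    (C : Set (X → ℝ)) (hC : ∀ c ∈ C, Measurable c ∧ ∀ x, c x ∈ Set.Icc (-1 : ℝ) 1)
    (α τ γ : ℝ) (hγ : 0 < γ)
    (S : Set X) (hS : MeasurableSet S) (hSγ : γ ≤ (D S).toReal)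
    (hMA : ∀ c ∈ C, ∫ x, c x * (f x - y x) ∂D ≤ α)
    (hc : ∃ c ∈ C, ∫ x, |c x - S.indicator (fun x => 1 - 2 * y x) x| ∂D ≤ τ) :
    ((D[|S]) {x | (if f x > 1/2 then (1 : ℝ) else 0) ≠ y x}).toReal
      ≤ 2 * (α + τ) / γ := by
  obtain ⟨c, hcC, hcτ⟩ := hc
  obtain ⟨hcm, hc1⟩ := hC c hcC
  have hfy1 : ∀ x, |f x - y x| ≤ 1 := fun x => by
    rw [← Real.dist_eq]
    exact Real.dist_le_of_mem_Icc_01 (hf01 x) (by rcases hy01 x with h | h <;> simp [h])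
  have hfy : Integrable (fun x => f x - y x) D :=
    .of_bound (hf.sub hy).aestronglyMeasurable 1 (.of_forall hfy1)
  have hŷ : Integrable (S.indicator fun x => 1 - 2 * y x) D :=
    (Integrable.of_bound (measurable_const.sub (measurable_const.mul hy)).aestronglyMeasurable 1
      (.of_forall fun x => by rcases hy01 x with h | h <;> norm_num [h])).indicator hS
  have hcint : Integrable c D :=
    .of_bound hcm.aestronglyMeasurable 1 (.of_forall fun x => abs_le.mpr (hc1 x))
  have hcorr : ∫ x in S, |f x - y x| ∂D ≤ α + τ := by
    rw [setIntegral_abs_sub_eq_integral_indicator_mul hS hy01 hf01]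
    exact (integral_mul_le_integral_mul_add_integral_abs_sub hŷ hcint hfy.1 hfy1).trans
      (add_le_add (hMA c hcC) hcτ)
  refine toReal_cond_le_div hS hγ hSγ ?_
  exact (measureReal_setOf_round_ne_inter_le hS hy01 hfy.abs.integrableOn).trans (by linarith)

/-- Multiaccuracy implies small classification error on an approximately
identifiable subpopulation (Proposition 1 of the paper). -/
theorem multiaccuracy_classification_error
    {X : Type*} [MeasurableSpace X] (D : Measure X) [IsProbabilityMeasure D]
    (y f : X → ℝ) (hy : Measurable y) (hy01 : ∀ x, y x = 0 ∨ y x = 1)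
    (hf : Measurable f) (hf01 : ∀ x, f x ∈ Set.Icc (0 : ℝ) 1)
    (C : Set (X → ℝ)) (hC : ∀ c ∈ C, Measurable c ∧ ∀ x, c x ∈ Set.Icc (-1 : ℝ) 1)
    (α τ γ : ℝ) (hα : 0 ≤ α) (hτ : 0 ≤ τ) (hγ : 0 < γ)
    (S : Set X) (hS : MeasurableSet S) (hSγ : γ ≤ (D S).toReal)
    (hMA : ∀ c ∈ C, ∫ x, c x * (f x - y x) ∂D ≤ α)
    (hc : ∃ c ∈ C, ∫ x, |c x - S.indicator (fun x => 1 - 2 * y x) x| ∂D ≤ τ) :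
    ((D[|S]) {x | (if f x > 1/2 then (1 : ℝ) else 0) ≠ y x}).toReal
      ≤ 2 * (α + τ) / γ :=
  multiaccuracy_classification_error_general D y f hy hy01 hf hf01 C hC α τ γ hγ S hS hSγ hMA hc
end

section
/- For every measurable set S ⊆ X and every measurable hypothesis f : X → [0,1], the expectation E[(1 - 2·y(x))·1_S(x)·(f(x) - y(x))] is at least (1/2)·D({x ∈ S : f̄(x) ≠ y(x)}). -/
open MeasureTheory ProbabilityTheory

/-! For a label `y ∈ {0, 1}` and a prediction `f ∈ [0, 1]`, the factor `1 - 2y = ±1` turns the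
residual `f - y` into `|f - y|`, and a point whose thresholded prediction is wrong lies on the
wrong side of `1/2`, so there `|f - y| ≥ 1/2`. The bound is then Markov's inequality for the
nonnegative function `1_S · |f - y|` at level `1/2`. -/

lemma one_sub_two_mul_mul_sub_eq_abs_sub {f y : ℝ} (hy : y = 0 ∨ y = 1)
    (hf : f ∈ Set.Icc (0 : ℝ) 1) : (1 - 2 * y) * (f - y) = |f - y| := by
  obtain ⟨hf0, hf1⟩ := hf
  rcases hy with rfl | rfl
  · rw [abs_of_nonneg (by linarith)]; ring
  · rw [abs_of_nonpos (by linarith)]; ring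

lemma half_le_abs_sub_of_threshold_ne {f y : ℝ} (hy : y = 0 ∨ y = 1)
    (h : (if f > 1/2 then (1 : ℝ) else 0) ≠ y) : 1/2 ≤ |f - y| := by
  split_ifs at h with hf
  · rcases hy with rfl | rfl
    · rw [sub_zero]; exact le_abs.mpr (Or.inl hf.le)
    · exact absurd rfl h
  · rcases hy with rfl | rfl
    · exact absurd rfl h
    · exact le_abs.mpr (Or.inr (by linarith))

lemma abs_sub_le_one_of_mem_Icc {a b : ℝ} (ha : a ∈ Set.Icc (0 : ℝ) 1)
    (hb : b ∈ Set.Icc (0 : ℝ) 1) : |a - b| ≤ 1 := by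
  obtain ⟨ha0, ha1⟩ := ha
  obtain ⟨hb0, hb1⟩ := hb
  exact abs_le.mpr ⟨by linarith, by linarith⟩

/-- The signed residual correlated with `(1 - 2y)·1_S` is at least half the mass
of the misclassified points in `S`. -/
theorem residual_correlation_lower_bound
    {X : Type*} [MeasurableSpace X] (D : Measure X) [IsProbabilityMeasure D]
    (y f : X → ℝ) (hy : Measurable y) (hy01 : ∀ x, y x = 0 ∨ y x = 1)
    (hf : Measurable f) (hf01 : ∀ x, f x ∈ Set.Icc (0 : ℝ) 1)
    (S : Set X) (hS : MeasurableSet S) :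
    ∫ x, (1 - 2 * y x) * S.indicator (fun _ => (1 : ℝ)) x * (f x - y x) ∂D
      ≥ (1/2) * (D {x | x ∈ S ∧ (if f x > 1/2 then (1 : ℝ) else 0) ≠ y x}).toReal := by
  set g : X → ℝ := S.indicator fun x => |f x - y x|
  have hy_mem : ∀ x, y x ∈ Set.Icc (0 : ℝ) 1 := fun x => by
    rcases hy01 x with h | h <;> simp [h]
  have integrand_eq : ∀ x,
      (1 - 2 * y x) * S.indicator (fun _ => (1 : ℝ)) x * (f x - y x) = g x := fun x => by
    by_cases hx : x ∈ S
    · simp only [g, Set.indicator_of_mem hx, mul_one]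
      exact one_sub_two_mul_mul_sub_eq_abs_sub (hy01 x) (hf01 x)
    · simp [g, hx]
  have g_int : Integrable g D :=
    (Integrable.of_bound (hf.sub hy).abs.aestronglyMeasurable 1 (.of_forall fun x => by
      simpa using abs_sub_le_one_of_mem_Icc (hf01 x) (hy_mem x))).indicator hS
  have misclassified_subset :
      {x | x ∈ S ∧ (if f x > 1/2 then (1 : ℝ) else 0) ≠ y x} ⊆ {x | 1/2 ≤ g x} :=
    fun x ⟨hxS, hne⟩ => by
      simpa [g, Set.indicator_of_mem hxS] using half_le_abs_sub_of_threshold_ne (hy01 x) hne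
  simp only [integrand_eq, ← measureReal_def, ge_iff_le]
  calc 1/2 * D.real {x | x ∈ S ∧ (if f x > 1/2 then (1 : ℝ) else 0) ≠ y x}
      ≤ 1/2 * D.real {x | 1/2 ≤ g x} := by
        gcongr
        exact measure_ne_top _ _
    _ ≤ ∫ x, g x ∂D :=
      mul_meas_ge_le_integral_of_nonneg (.of_forall fun x => Set.indicator_nonneg
        (fun _ _ => abs_nonneg _) x) g_int _
end

section
/- (Do-no-harm.) Let α, β, γ > 0 with α ≤ β·γ, let f_0, f : X → [0,1] be measurable hypotheses, and let S ⊆ X be measurable with D(S) ≥ γ. Set S_1 = {x ∈ S : f_0(x) > 1/2} and S_0 = S \ S_1. Suppose E[1_{S_1}(x)·(y(x) - f(x))] ≤ α and E[1_{S_0}(x)·(f(x) - y(x))] ≤ α. Then the classification error of f on S satisfies er_S(f;y) ≤ 3·er_S(f_0;y) + 4·β. -/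
/-! The argument is one pointwise inequality on `S`: `1[f̄ ≠ y] ≤ 3·1[f̄₀ ≠ y] + 2·w`, where the
audit weight `w` is `y - f` on `S₁` and `f - y` on `S₀`. Where `f₀` errs, `w ≥ -1`; where `f₀` is
right, `w ≥ 0`, and even `w ≥ 1/2` where `f` errs. Integrating over `S` and using both audits
gives `D(S ∩ {f̄ ≠ y}) ≤ 3·D(S ∩ {f̄₀ ≠ y}) + 4α`; divide by `D(S)` and use `α ≤ βγ ≤ β·D(S)`. -/

open MeasureTheory ProbabilityTheory Set

section

variable {X : Type*}

def misclassified (g y : X → ℝ) : Set X := {x | (if g x > 1/2 then (1 : ℝ) else 0) ≠ y x}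

lemma indicator_misclassified_le {S : Set X} {y f₀ f : X → ℝ} (hy : ∀ x, y x = 0 ∨ y x = 1)
    (hf : ∀ x, f x ∈ Icc (0 : ℝ) 1) (x : X) :
    (S ∩ misclassified f y).indicator 1 x ≤ 3 * (S ∩ misclassified f₀ y).indicator 1 x
      + 2 * ({x | x ∈ S ∧ f₀ x > 1/2}.indicator (fun _ => (1 : ℝ)) x * (y x - f x)
        + (S \ {x | x ∈ S ∧ f₀ x > 1/2}).indicator (fun _ => (1 : ℝ)) x * (f x - y x)) := by
  obtain ⟨hf0, hf1⟩ := hf x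
  by_cases hxS : x ∈ S
  · rcases hy x with hyx | hyx <;> simp [misclassified, indicator, hxS, hyx] <;> split_ifs <;>
      linarith
  · simp [indicator, hxS]

variable [MeasurableSpace X]

lemma measurableSet_misclassified {g y : X → ℝ} (hg : Measurable g) (hy : Measurable y) :
    MeasurableSet (misclassified g y) :=
  (measurableSet_eq_fun (Measurable.ite (measurableSet_lt measurable_const hg)
    measurable_const measurable_const) hy).compl

lemma integrable_indicator_one_mul {μ : Measure X} [IsFiniteMeasure μ] {U : Set X} {g : X → ℝ}
    (hU : MeasurableSet U) (hg : Measurable g) {c : ℝ} (hgc : ∀ x, |g x| ≤ c) :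
    Integrable (fun x => U.indicator (fun _ => (1 : ℝ)) x * g x) μ :=
  ((integrable_const 1).indicator hU).mul_bdd hg.aestronglyMeasurable (.of_forall hgc)

lemma cond_real_le_of_measureReal_inter_le {μ : Measure X} {S E E₀ : Set X}
    (hS : MeasurableSet S) {c a b : ℝ} (hb : 0 ≤ b) (hab : a ≤ b * μ.real S)
    (h : μ.real (S ∩ E) ≤ c * μ.real (S ∩ E₀) + a) :
    (μ[|S]).real E ≤ c * (μ[|S]).real E₀ + b := by
  simp only [measureReal_def, cond_apply hS, ENNReal.toReal_mul, ENNReal.toReal_inv] at *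
  calc (μ S).toReal⁻¹ * (μ (S ∩ E)).toReal
      ≤ (μ S).toReal⁻¹ * (c * (μ (S ∩ E₀)).toReal + a) := by gcongr
    _ = c * ((μ S).toReal⁻¹ * (μ (S ∩ E₀)).toReal) + a / (μ S).toReal := by ring
    _ ≤ c * ((μ S).toReal⁻¹ * (μ (S ∩ E₀)).toReal) + b := by
      -- no positivity of `μ S` is needed: if `(μ S).toReal = 0`, then `a / 0 = 0 ≤ b`
      gcongr; exact div_le_of_le_mul₀ ENNReal.toReal_nonneg hb hab

lemma measureReal_inter_misclassified_le {μ : Measure X} [IsFiniteMeasure μ] {S : Set X}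
    (hS : MeasurableSet S) {y f₀ f : X → ℝ} (hy : Measurable y) (hy01 : ∀ x, y x = 0 ∨ y x = 1)
    (hf₀ : Measurable f₀) (hf : Measurable f) (hf01 : ∀ x, f x ∈ Icc (0 : ℝ) 1) :
    μ.real (S ∩ misclassified f y) ≤ 3 * μ.real (S ∩ misclassified f₀ y)
      + 2 * (∫ x, {x | x ∈ S ∧ f₀ x > 1/2}.indicator (fun _ => (1 : ℝ)) x * (y x - f x) ∂μ
        + ∫ x, (S \ {x | x ∈ S ∧ f₀ x > 1/2}).indicator (fun _ => (1 : ℝ)) x * (f x - y x) ∂μ) := by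
  have hS₁ : MeasurableSet {x | x ∈ S ∧ f₀ x > 1/2} :=
    hS.inter (measurableSet_lt measurable_const hf₀)
  have hE : MeasurableSet (S ∩ misclassified f y) := hS.inter (measurableSet_misclassified hf hy)
  have hE₀ : MeasurableSet (S ∩ misclassified f₀ y) :=
    hS.inter (measurableSet_misclassified hf₀ hy)
  have hyf : ∀ x, |y x - f x| ≤ 1 := fun x => by
    obtain ⟨h0, h1⟩ := hf01 x
    rcases hy01 x with h | h <;> rw [abs_le] <;> constructor <;> linarith
  set a₁ : X → ℝ := fun x => {x | x ∈ S ∧ f₀ x > 1/2}.indicator (fun _ => 1) x * (y x - f x)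
  set a₀ : X → ℝ := fun x =>
    (S \ {x | x ∈ S ∧ f₀ x > 1/2}).indicator (fun _ => 1) x * (f x - y x)
  have i₁ : Integrable a₁ μ := integrable_indicator_one_mul hS₁ (hy.sub hf) hyf
  have i₀ : Integrable a₀ μ := integrable_indicator_one_mul (hS.diff hS₁) (hf.sub hy)
    fun x => (abs_sub_comm (f x) (y x)).trans_le (hyf x)
  have i₃ : Integrable (fun x => 3 * (S ∩ misclassified f₀ y).indicator (1 : X → ℝ) x) μ :=
    ((integrable_const 1).indicator hE₀).const_mul 3
  have i₂ : Integrable (fun x => 2 * (a₁ x + a₀ x)) μ := (i₁.add i₀).const_mul 2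
  calc μ.real (S ∩ misclassified f y)
        = ∫ x, (S ∩ misclassified f y).indicator (1 : X → ℝ) x ∂μ :=
        (integral_indicator_one hE).symm
    _ ≤ ∫ x, (3 * (S ∩ misclassified f₀ y).indicator (1 : X → ℝ) x + 2 * (a₁ x + a₀ x)) ∂μ :=
        integral_mono ((integrable_const 1).indicator hE) (i₃.add i₂)
          (indicator_misclassified_le hy01 hf01)
    _ = 3 * μ.real (S ∩ misclassified f₀ y) + 2 * (∫ x, a₁ x ∂μ + ∫ x, a₀ x ∂μ) := by
      rw [integral_add i₃ i₂, integral_const_mul, integral_const_mul, integral_add i₁ i₀,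
        integral_indicator_one hE₀]

end

theorem do_no_harm_general
    {X : Type*} [MeasurableSpace X] (D : Measure X) [IsProbabilityMeasure D]
    (y f₀ f : X → ℝ) (hy : Measurable y) (hy01 : ∀ x, y x = 0 ∨ y x = 1)
    (hf₀ : Measurable f₀)
    (hf : Measurable f) (hf01 : ∀ x, f x ∈ Set.Icc (0 : ℝ) 1)
    (α β γ : ℝ) (hβ : 0 < β) (hαβγ : α ≤ β * γ)
    (S : Set X) (hS : MeasurableSet S) (hSγ : γ ≤ (D S).toReal)
    (S₁ S₀ : Set X)
    (hS₁ : S₁ = {x | x ∈ S ∧ f₀ x > 1/2}) (hS₀ : S₀ = S \ S₁)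
    (haudit₁ : ∫ x, S₁.indicator (fun _ => (1 : ℝ)) x * (y x - f x) ∂D ≤ α)
    (haudit₀ : ∫ x, S₀.indicator (fun _ => (1 : ℝ)) x * (f x - y x) ∂D ≤ α) :
    ((D[|S]) {x | (if f x > 1/2 then (1 : ℝ) else 0) ≠ y x}).toReal
      ≤ 3 * ((D[|S]) {x | (if f₀ x > 1/2 then (1 : ℝ) else 0) ≠ y x}).toReal + 4 * β := by
  subst hS₁ hS₀
  change (D[|S]).real (misclassified f y) ≤ 3 * (D[|S]).real (misclassified f₀ y) + 4 * β
  have hαS : α ≤ β * D.real S := hαβγ.trans (mul_le_mul_of_nonneg_left hSγ hβ.le)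
  refine cond_real_le_of_measureReal_inter_le hS (by linarith) (a := 4 * α) (by linarith) ?_
  linarith [measureReal_inter_misclassified_le (μ := D) hS hy hy01 hf₀ hf hf01]

/-- Do-no-harm (Theorem 2 of the paper): if the post-processed hypothesis `f`
passes the auditing tests given by the indicators of `S₁` and `S₀`, then its
classification error on `S` is at most `3·er_S(f₀) + 4β`. -/
theorem do_no_harm
    {X : Type*} [MeasurableSpace X] (D : Measure X) [IsProbabilityMeasure D]
    (y f₀ f : X → ℝ) (hy : Measurable y) (hy01 : ∀ x, y x = 0 ∨ y x = 1)
    (hf₀ : Measurable f₀) (hf₀01 : ∀ x, f₀ x ∈ Set.Icc (0 : ℝ) 1)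
    (hf : Measurable f) (hf01 : ∀ x, f x ∈ Set.Icc (0 : ℝ) 1)
    (α β γ : ℝ) (hα : 0 < α) (hβ : 0 < β) (hγ : 0 < γ) (hαβγ : α ≤ β * γ)
    (S : Set X) (hS : MeasurableSet S) (hSγ : γ ≤ (D S).toReal)
    (S₁ S₀ : Set X)
    (hS₁ : S₁ = {x | x ∈ S ∧ f₀ x > 1/2}) (hS₀ : S₀ = S \ S₁)
    (haudit₁ : ∫ x, S₁.indicator (fun _ => (1 : ℝ)) x * (y x - f x) ∂D ≤ α)
    (haudit₀ : ∫ x, S₀.indicator (fun _ => (1 : ℝ)) x * (f x - y x) ∂D ≤ α) :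
    ((D[|S]) {x | (if f x > 1/2 then (1 : ℝ) else 0) ≠ y x}).toReal
      ≤ 3 * ((D[|S]) {x | (if f₀ x > 1/2 then (1 : ℝ) else 0) ≠ y x}).toReal + 4 * β :=
  do_no_harm_general D y f₀ f hy hy01 hf₀ hf hf01 α β γ hβ hαβγ S hS hSγ S₁ S₀ hS₁ hS₀ haudit₁
    haudit₀
end

section
/- Let T ⊆ X be measurable with D(T) > 0, and let f_0, f : X → [0,1] be measurable hypotheses such that f_0(x) > 1/2 for every x ∈ T. Let τ = er_T(f_0;y) and suppose the conditional expectation E_{x∼T}[y(x) - f(x)] ≤ β_1 for some β_1 ≥ 0. Then er_T(f;y) ≤ 2·β_1 + 3·τ. -/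
/-!
Pointwise, the 0-1 loss of `f` is at most `2 (y - f) + 3·[y = 0]`: a positive example is
misclassified only when `f ≤ 1/2`, i.e. when `y - f ≥ 1/2`. Integrating over `T` bounds the error
of `f` by `2 β₁ + 3 D(y = 0 | T)`, and since `f₀` predicts `1` everywhere on `T`, every negative
example of `T` is an error of `f₀`, so `D(y = 0 | T) ≤ τ`.
-/

open MeasureTheory ProbabilityTheory

lemma misclassified_indicator_le {y p : ℝ} (hy : y = 0 ∨ y = 1) (hp : p ≤ 1) :
    (if (if p > 1/2 then (1 : ℝ) else 0) ≠ y then (1 : ℝ) else 0)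
      ≤ 2 * (y - p) + 3 * (if y = 0 then 1 else 0) := by
  rcases hy with rfl | rfl <;> split_ifs <;> norm_num at * <;> linarith

lemma measureReal_misclassified_le {X : Type*} [MeasurableSpace X] (μ : Measure X)
    [IsFiniteMeasure μ] {y f : X → ℝ} (hy : Measurable y) (hy01 : ∀ x, y x = 0 ∨ y x = 1)
    (hf : Measurable f) (hf01 : ∀ x, f x ∈ Set.Icc (0 : ℝ) 1) :
    μ.real {x | (if f x > 1/2 then (1 : ℝ) else 0) ≠ y x}
      ≤ 2 * ∫ x, (y x - f x) ∂μ + 3 * μ.real {x | y x = 0} := by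
  have hErr : MeasurableSet {x | (if f x > 1/2 then (1 : ℝ) else 0) ≠ y x} :=
    (measurableSet_eq_fun (Measurable.ite (measurableSet_lt measurable_const hf)
      measurable_const measurable_const) hy).compl
  have hNeg : MeasurableSet {x | y x = 0} := hy (measurableSet_singleton 0)
  have hyi : Integrable y μ :=
    (integrable_const (1 : ℝ)).mono' hy.aestronglyMeasurable
      (.of_forall fun x => by rcases hy01 x with h | h <;> simp [h])
  have hfi : Integrable f μ :=
    (integrable_const (1 : ℝ)).mono' hf.aestronglyMeasurable
      (.of_forall fun x => by rw [Real.norm_eq_abs, abs_of_nonneg (hf01 x).1]; exact (hf01 x).2)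
  have hBiasi : Integrable (fun x => 2 * (y x - f x)) μ := (hyi.sub hfi).const_mul 2
  have hNegi : Integrable (fun x => 3 * {x | y x = 0}.indicator (1 : X → ℝ) x) μ :=
    ((integrable_const 1).indicator hNeg).const_mul 3
  calc μ.real {x | (if f x > 1/2 then (1 : ℝ) else 0) ≠ y x}
      = ∫ x, {x | (if f x > 1/2 then (1 : ℝ) else 0) ≠ y x}.indicator 1 x ∂μ := by
        rw [integral_indicator_one hErr]
    _ ≤ ∫ x, (2 * (y x - f x) + 3 * {x | y x = 0}.indicator 1 x) ∂μ := by
        refine integral_mono ((integrable_const 1).indicator hErr)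
          (hBiasi.add hNegi) fun x => ?_
        simpa [Set.indicator_apply] using misclassified_indicator_le (hy01 x) (hf01 x).2
    _ = 2 * ∫ x, (y x - f x) ∂μ + 3 * μ.real {x | y x = 0} := by
        rw [integral_add hBiasi hNegi, integral_const_mul, integral_const_mul,
          integral_indicator_one hNeg]

lemma cond_label_zero_le_cond_misclassified {X : Type*} [MeasurableSpace X] (D : Measure X)
    {y f₀ : X → ℝ} {T : Set X} (hT : MeasurableSet T) (hf₀T : ∀ x ∈ T, f₀ x > 1/2) :
    D[{x | y x = 0} | T] ≤ D[{x | (if f₀ x > 1/2 then (1 : ℝ) else 0) ≠ y x} | T] := by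
  rw [← cond_inter_self hT]
  refine measure_mono fun x ⟨hxT, hx0⟩ => ?_
  simp_all

theorem error_on_positive_region_general
    {X : Type*} [MeasurableSpace X] (D : Measure X)
    (y f₀ f : X → ℝ) (hy : Measurable y) (hy01 : ∀ x, y x = 0 ∨ y x = 1)
    (hf : Measurable f) (hf01 : ∀ x, f x ∈ Set.Icc (0 : ℝ) 1)
    (T : Set X) (hT : MeasurableSet T)
    (hf₀T : ∀ x ∈ T, f₀ x > 1/2)
    (τ β₁ : ℝ)
    (hτ : τ = ((D[|T]) {x | (if f₀ x > 1/2 then (1 : ℝ) else 0) ≠ y x}).toReal)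
    (hcond : ∫ x, (y x - f x) ∂(D[|T]) ≤ β₁) :
    ((D[|T]) {x | (if f x > 1/2 then (1 : ℝ) else 0) ≠ y x}).toReal ≤ 2 * β₁ + 3 * τ := by
  calc ((D[|T]) {x | (if f x > 1/2 then (1 : ℝ) else 0) ≠ y x}).toReal
      ≤ 2 * ∫ x, (y x - f x) ∂(D[|T]) + 3 * (D[|T]).real {x | y x = 0} :=
        measureReal_misclassified_le (D[|T]) hy hy01 hf hf01
    _ ≤ 2 * β₁ + 3 * τ := by
        rw [hτ]
        gcongr
        exact ENNReal.toReal_mono (measure_ne_top _ _)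
          (cond_label_zero_le_cond_misclassified D hT hf₀T)

/-- On a region `T` where the initial hypothesis `f₀` predicts positively, a bound
on the conditional bias of `f` bounds the classification error of `f` on `T` in
terms of that of `f₀`. -/
theorem error_on_positive_region
    {X : Type*} [MeasurableSpace X] (D : Measure X) [IsProbabilityMeasure D]
    (y f₀ f : X → ℝ) (hy : Measurable y) (hy01 : ∀ x, y x = 0 ∨ y x = 1)
    (hf₀ : Measurable f₀) (hf₀01 : ∀ x, f₀ x ∈ Set.Icc (0 : ℝ) 1)
    (hf : Measurable f) (hf01 : ∀ x, f x ∈ Set.Icc (0 : ℝ) 1)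
    (T : Set X) (hT : MeasurableSet T) (hTpos : 0 < D T)
    (hf₀T : ∀ x ∈ T, f₀ x > 1/2)
    (τ β₁ : ℝ) (hβ₁ : 0 ≤ β₁)
    (hτ : τ = ((D[|T]) {x | (if f₀ x > 1/2 then (1 : ℝ) else 0) ≠ y x}).toReal)
    (hcond : ∫ x, (y x - f x) ∂(D[|T]) ≤ β₁) :
    ((D[|T]) {x | (if f x > 1/2 then (1 : ℝ) else 0) ≠ y x}).toReal ≤ 2 * β₁ + 3 * τ :=
  error_on_positive_region_general D y f₀ f hy hy01 hf hf01 T hT hf₀T τ β₁ hτ hcond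
end

section
/- Let p ∈ (0,1), b ∈ {0,1}, c ∈ ℝ, and η > 0 with |η·c| ≤ 1, and set p' = p·e^{-η·c} / (1 - p + p·e^{-η·c}). Then the cross-entropy loss drop satisfies [−b·log p − (1−b)·log(1−p)] − [−b·log p' − (1−b)·log(1−p')] ≥ η·c·(p − b) − η²·c². -/
/-!
With `x = η·c`, write `D = 1 - p + p·e^{-x}` for the normaliser of the update. Then
`log p' = log p - x - log D` and `log (1 - p') = log (1 - p) - log D`, so the loss drop is
exactly `-b·x - log D`. The bound therefore reduces to
`log D ≤ D - 1 = p (e^{-x} - 1) ≤ p (-x + x²) ≤ -p·x + x²`, where the middle step is the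
second-order bound `e^y ≤ 1 + y + y²` for `|y| ≤ 1`.
-/

open Real

noncomputable section

def crossEntropy (b p : ℝ) : ℝ := -b * log p - (1 - b) * log (1 - p)

def mwNormalizer (p y : ℝ) : ℝ := 1 - p + p * exp y

def mwUpdate (p y : ℝ) : ℝ := p * exp y / mwNormalizer p y

end

lemma exp_le_one_add_add_sq {y : ℝ} (hy : |y| ≤ 1) : exp y ≤ 1 + y + y ^ 2 := by
  linarith [(abs_le.mp (abs_exp_sub_one_sub_id_le hy)).2]

section

variable {p : ℝ} (y : ℝ)

lemma mwNormalizer_pos (hp : p ∈ Set.Icc (0 : ℝ) 1) : 0 < mwNormalizer p y := by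
  unfold mwNormalizer
  rcases hp.2.lt_or_eq with hp1 | rfl
  · nlinarith [mul_nonneg hp.1 (exp_pos y).le]
  · simpa using exp_pos y

lemma log_mwNormalizer_le {y : ℝ} (hp : p ∈ Set.Icc (0 : ℝ) 1) (hy : |y| ≤ 1) :
    log (mwNormalizer p y) ≤ p * y + y ^ 2 :=
  calc log (mwNormalizer p y)
      ≤ mwNormalizer p y - 1 := log_le_sub_one_of_pos (mwNormalizer_pos y hp)
    _ = p * (exp y - 1) := by unfold mwNormalizer; ring
    _ ≤ p * (y + y ^ 2) :=
      mul_le_mul_of_nonneg_left (by linarith [exp_le_one_add_add_sq hy]) hp.1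
    _ ≤ p * y + y ^ 2 := by nlinarith [hp.2, sq_nonneg y]

lemma log_mwUpdate (hp : p ∈ Set.Ioo (0 : ℝ) 1) :
    log (mwUpdate p y) = log p + y - log (mwNormalizer p y) := by
  rw [mwUpdate, log_div (mul_pos hp.1 (exp_pos y)).ne'
      (mwNormalizer_pos y (Set.Ioo_subset_Icc_self hp)).ne',
    log_mul hp.1.ne' (exp_pos y).ne', log_exp]

lemma one_sub_mwUpdate (hp : p ∈ Set.Icc (0 : ℝ) 1) :
    1 - mwUpdate p y = (1 - p) / mwNormalizer p y := by
  have := (mwNormalizer_pos y hp).ne'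
  rw [mwUpdate, eq_div_iff this, sub_mul, div_mul_cancel₀ _ this]
  unfold mwNormalizer; ring

lemma log_one_sub_mwUpdate (hp : p ∈ Set.Ioo (0 : ℝ) 1) :
    log (1 - mwUpdate p y) = log (1 - p) - log (mwNormalizer p y) := by
  have hp' := Set.Ioo_subset_Icc_self hp
  rw [one_sub_mwUpdate y hp', log_div (by linarith [hp.2]) (mwNormalizer_pos y hp').ne']

lemma crossEntropy_sub_crossEntropy_mwUpdate (b : ℝ) (hp : p ∈ Set.Ioo (0 : ℝ) 1) :
    crossEntropy b p - crossEntropy b (mwUpdate p y) = b * y - log (mwNormalizer p y) := by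
  rw [crossEntropy, crossEntropy, log_mwUpdate y hp, log_one_sub_mwUpdate y hp]
  ring

end

theorem mw_pointwise_progress_general
    (p b c η : ℝ) (hp : p ∈ Set.Ioo (0 : ℝ) 1)
    (hηc : |η * c| ≤ 1)
    (p' : ℝ)
    (hp' : p' = p * Real.exp (-η * c) / (1 - p + p * Real.exp (-η * c))) :
    (-b * Real.log p - (1 - b) * Real.log (1 - p))
      - (-b * Real.log p' - (1 - b) * Real.log (1 - p'))
      ≥ η * c * (p - b) - η^2 * c^2 := by
  have hy : |-η * c| ≤ 1 := by rwa [neg_mul, abs_neg]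
  have hdrop := crossEntropy_sub_crossEntropy_mwUpdate (-η * c) b hp
  have hlog := log_mwNormalizer_le (Set.Ioo_subset_Icc_self hp) hy
  rw [← mwNormalizer, ← mwUpdate] at hp'
  rw [← crossEntropy, ← crossEntropy, hp', hdrop]
  linarith

/-- Pointwise progress of the multiplicative-weights update: the drop in
cross-entropy loss is at least `η·c·(p − b) − η²·c²`. -/
theorem mw_pointwise_progress
    (p b c η : ℝ) (hp : p ∈ Set.Ioo (0 : ℝ) 1) (hb : b = 0 ∨ b = 1)
    (hη : 0 < η) (hηc : |η * c| ≤ 1)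
    (p' : ℝ)
    (hp' : p' = p * Real.exp (-η * c) / (1 - p + p * Real.exp (-η * c))) :
    (-b * Real.log p - (1 - b) * Real.log (1 - p))
      - (-b * Real.log p' - (1 - b) * Real.log (1 - p'))
      ≥ η * c * (p - b) - η^2 * c^2 :=
  mw_pointwise_progress_general p b c η hp hηc p' hp'
end

section
/- Let f : X → (0,1) and h : X → ℝ be measurable, define g(x) = 1/(1 − f(x) − y(x)), and suppose g², h², and (f−y)² are D-integrable with E[(f(x) − y(x))²] > 0 and E[g(x)·(f(x) − y(x))] ≥ 0. If E[(h(x) − g(x))²] ≤ E[g(x)·(f(x) − y(x))]² / (2·E[(f(x) − y(x))²]), then E[h(x)·(f(x) − y(x))] ≥ (1/4)·ℓ_D(f;y). -/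
/-!
Write `r = f - y`. Pointwise `0 ≤ ℓ_x(f; y)`, and `-log t ≤ 1/t - 1` gives `ℓ_x(f; y) ≤ g(x) r(x)`, so
`0 ≤ ℓ_D(f; y) ≤ A := E[g r]`. Splitting `E[h r] = A + E[(h - g) r]` and bounding the error term by
Cauchy–Schwarz, `E[(h - g) r]² ≤ E[(h - g)²] E[r²] ≤ A² / 2`, so `E[(h - g) r] ≥ -A/√2 ≥ -3A/4`
and `E[h r] ≥ A / 4`.
-/

open MeasureTheory Real

lemma crossEntropy_nonneg {y p : ℝ} (hy : y ∈ Set.Icc 0 1) (hp : p ∈ Set.Ioo 0 1) :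
    0 ≤ -y * log p - (1 - y) * log (1 - p) := by
  have hlog_p : log p ≤ 0 := log_nonpos hp.1.le hp.2.le
  have hlog_q : log (1 - p) ≤ 0 := log_nonpos (by linarith [hp.2]) (by linarith [hp.1])
  nlinarith [hy.1, hy.2]

lemma crossEntropy_le_div_mul_sub {y p : ℝ} (hy : y = 0 ∨ y = 1) (hp : p ∈ Set.Ioo 0 1) :
    -y * log p - (1 - y) * log (1 - p) ≤ 1 / (1 - p - y) * (p - y) := by
  obtain ⟨hp0, hp1⟩ := hp
  rcases hy with rfl | rfl
  · have h1p : 0 < 1 - p := by linarith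
    have key : 1 / (1 - p - 0) * (p - 0) = (1 - p)⁻¹ - 1 := by
      have := h1p.ne'
      field_simp
      ring
    rw [key]
    linarith [one_sub_inv_le_log_of_pos h1p]
  · have key : 1 / (1 - p - 1) * (p - 1) = p⁻¹ - 1 := by
      rw [show 1 - p - 1 = -p by ring]
      field_simp
      ring
    rw [key]
    linarith [one_sub_inv_le_log_of_pos hp0]

section L2

variable {X : Type*} [MeasurableSpace X] {μ : Measure X} {u v w : X → ℝ}

lemma integral_mul_eq_inner_toLp (hu : MemLp u 2 μ) (hv : MemLp v 2 μ) :
    ∫ x, u x * v x ∂μ = inner ℝ (hu.toLp u) (hv.toLp v) := by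
  rw [L2.inner_def]
  refine integral_congr_ae ?_
  filter_upwards [hu.coeFn_toLp, hv.coeFn_toLp] with x hux hvx
  rw [hux, hvx, Real.inner_apply]

lemma sq_integral_mul_le (hu : MemLp u 2 μ) (hv : MemLp v 2 μ) :
    (∫ x, u x * v x ∂μ) ^ 2 ≤ (∫ x, u x ^ 2 ∂μ) * ∫ x, v x ^ 2 ∂μ := by
  simpa only [← integral_mul_eq_inner_toLp, ← sq] using
    real_inner_mul_inner_self_le (hu.toLp u) (hv.toLp v)

theorem quarter_integral_mul_le_integral_mul_of_integral_sq_sub_le (hu : MemLp u 2 μ)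
    (hv : MemLp v 2 μ) (hw : MemLp w 2 μ) (hvw : 0 ≤ ∫ x, v x * w x ∂μ)
    (hclose : ∫ x, (u x - v x) ^ 2 ∂μ
      ≤ (∫ x, v x * w x ∂μ) ^ 2 / (2 * ∫ x, w x ^ 2 ∂μ)) :
    (1 / 4) * ∫ x, v x * w x ∂μ ≤ ∫ x, u x * w x ∂μ := by
  set A := ∫ x, v x * w x ∂μ
  set C := ∫ x, (u x - v x) * w x ∂μ
  have hsplit : ∫ x, u x * w x ∂μ = A + C := by
    have huw : Integrable (fun x => u x * w x) μ := hu.integrable_mul hw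
    have hvw : Integrable (fun x => v x * w x) μ := hv.integrable_mul hw
    simp only [A, C, sub_mul, integral_sub huw hvw]
    ring
  have hw2 : 0 ≤ ∫ x, w x ^ 2 ∂μ := integral_nonneg fun x => sq_nonneg _
  have hC : C ^ 2 ≤ A ^ 2 / 2 := by
    refine (sq_integral_mul_le (hu.sub hv) hw).trans ?_
    rcases hw2.eq_or_lt with hw0 | hw0
    · rw [← hw0, mul_zero]
      positivity
    · calc (∫ x, (u x - v x) ^ 2 ∂μ) * ∫ x, w x ^ 2 ∂μ
          ≤ A ^ 2 / (2 * ∫ x, w x ^ 2 ∂μ) * ∫ x, w x ^ 2 ∂μ := by gcongr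
        _ = A ^ 2 / 2 := by field_simp
  -- `C ≥ -A / √2 ≥ -3A / 4`
  rw [hsplit]
  nlinarith [sq_nonneg (C + 3 / 4 * A)]

end L2

theorem approx_gradient_correlation_loss_general
    {X : Type*} [MeasurableSpace X] (D : Measure X)
    (y f h : X → ℝ) (hy : Measurable y) (hy01 : ∀ x, y x = 0 ∨ y x = 1)
    (hf : Measurable f) (hf01 : ∀ x, f x ∈ Set.Ioo (0 : ℝ) 1)
    (hh : Measurable h)
    (g : X → ℝ) (hg : ∀ x, g x = 1 / (1 - f x - y x))
    (hg2 : Integrable (fun x => (g x)^2) D)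
    (hh2 : Integrable (fun x => (h x)^2) D)
    (hr2 : Integrable (fun x => (f x - y x)^2) D)
    (hclose : ∫ x, (h x - g x)^2 ∂D
      ≤ (∫ x, g x * (f x - y x) ∂D)^2 / (2 * ∫ x, (f x - y x)^2 ∂D)) :
    ∫ x, h x * (f x - y x) ∂D
      ≥ (1/4) * ∫ x, (-(y x) * Real.log (f x) - (1 - y x) * Real.log (1 - f x)) ∂D := by
  have hgm : Measurable g := by
    rw [funext hg]
    fun_prop
  have hgL : MemLp g 2 D := (memLp_two_iff_integrable_sq hgm.aestronglyMeasurable).2 hg2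
  have hhL : MemLp h 2 D := (memLp_two_iff_integrable_sq hh.aestronglyMeasurable).2 hh2
  have hrL : MemLp (fun x => f x - y x) 2 D :=
    (memLp_two_iff_integrable_sq (hf.sub hy).aestronglyMeasurable).2 hr2
  have hloss_nonneg (x : X) : 0 ≤ -(y x) * log (f x) - (1 - y x) * log (1 - f x) :=
    crossEntropy_nonneg (by rcases hy01 x with hx | hx <;> simp [hx]) (hf01 x)
  have hloss_le : ∫ x, (-(y x) * log (f x) - (1 - y x) * log (1 - f x)) ∂D
      ≤ ∫ x, g x * (f x - y x) ∂D :=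
    integral_mono_of_nonneg (ae_of_all _ hloss_nonneg) (hgL.integrable_mul hrL)
      (ae_of_all _ fun x => by
        simpa only [hg x] using crossEntropy_le_div_mul_sub (hy01 x) (hf01 x))
  have hgr : 0 ≤ ∫ x, g x * (f x - y x) ∂D := (integral_nonneg hloss_nonneg).trans hloss_le
  have := quarter_integral_mul_le_integral_mul_of_integral_sq_sub_le hhL hgL hrL hgr hclose
  linarith

/-- If `h` approximates the cross-entropy gradient `g` well enough, then the
correlation of `h` with the residual is at least a quarter of the expected
cross-entropy loss. -/
theorem approx_gradient_correlation_loss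
    {X : Type*} [MeasurableSpace X] (D : Measure X) [IsProbabilityMeasure D]
    (y f h : X → ℝ) (hy : Measurable y) (hy01 : ∀ x, y x = 0 ∨ y x = 1)
    (hf : Measurable f) (hf01 : ∀ x, f x ∈ Set.Ioo (0 : ℝ) 1)
    (hh : Measurable h)
    (g : X → ℝ) (hg : ∀ x, g x = 1 / (1 - f x - y x))
    (hg2 : Integrable (fun x => (g x)^2) D)
    (hh2 : Integrable (fun x => (h x)^2) D)
    (hr2 : Integrable (fun x => (f x - y x)^2) D)
    (hrpos : 0 < ∫ x, (f x - y x)^2 ∂D)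
    (hgr : 0 ≤ ∫ x, g x * (f x - y x) ∂D)
    (hclose : ∫ x, (h x - g x)^2 ∂D
      ≤ (∫ x, g x * (f x - y x) ∂D)^2 / (2 * ∫ x, (f x - y x)^2 ∂D)) :
    ∫ x, h x * (f x - y x) ∂D
      ≥ (1/4) * ∫ x, (-(y x) * Real.log (f x) - (1 - y x) * Real.log (1 - f x)) ∂D :=
  approx_gradient_correlation_loss_general D y f h hy hy01 hf hf01 hh g hg hg2 hh2 hr2 hclose
end
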